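/- arXiv:2106.01737 — 2 statements merged into one kernel-verified Lean document; each statement's English description precedes it below -/
import Mathlib

section
/- For every β ∈ [1,2) and every b ∈ ℕ, G(β) ≤ 1/(2^b·β) − h(1/(2^{b+1}·β)). (Consequently, for n = β·2^k, q(n) ≥ 2^{(h(1/(2^{b+1}β)) − 1/(2^bβ))·n − o(n)}.) -/
/-- The binary entropy function, `h(p) = p log₂(1/p) + (1-p) log₂(1/(1-p))`,
with the convention `h(0) = h(1) = 0` (automatic since `1/0 = 0` and `logb 2 0 = 0`). -/
noncomputable def binH (p : ℝ) : ℝ :=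
  p * Real.logb 2 (1 / p) + (1 - p) * Real.logb 2 (1 / (1 - p))

/-- `(c, b) ∈ C(β)`: `c : ℕ → [0,1]`, `∑ cᵢ/2ⁱ = 1/(β·2ᵇ)` and `∑ cᵢ ≤ 1`
(the latter expressed via partial sums, which is equivalent for nonnegative terms). -/
def memC (β : ℝ) (c : ℕ → ℝ) (b : ℕ) : Prop :=
  (∀ i, c i ∈ Set.Icc (0 : ℝ) 1) ∧
  (∑' i : ℕ, c i / 2 ^ i) = 1 / (β * 2 ^ b) ∧
  ∀ n : ℕ, (∑ i ∈ Finset.range n, c i) ≤ 1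

/-- `α ∈ A(c,b)`: `α : ℕ → [0,1]` with `∑ αᵢ cᵢ / 2ⁱ = 1/(β·2^{b+1})`. -/
def memA (β : ℝ) (b : ℕ) (c α : ℕ → ℝ) : Prop :=
  (∀ i, α i ∈ Set.Icc (0 : ℝ) 1) ∧
  (∑' i : ℕ, α i * c i / 2 ^ i) = 1 / (β * 2 ^ (b + 1))

/-- `P(c,α) = ∑ h(αᵢ)·cᵢ − h(∑ αᵢ·cᵢ)`. -/
noncomputable def Pfun (c α : ℕ → ℝ) : ℝ :=
  (∑' i : ℕ, binH (α i) * c i) - binH (∑' i : ℕ, α i * c i)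

/-- `sup_{α ∈ A(c,b)} P(c,α)`. -/
noncomputable def supP (β : ℝ) (b : ℕ) (c : ℕ → ℝ) : ℝ :=
  sSup {y | ∃ α, memA β b c α ∧ y = Pfun c α}

/-- `G(β) = inf_{(c,b) ∈ C(β)} sup_{α ∈ A(c,b)} P(c,α)`. -/
noncomputable def Gfun (β : ℝ) : ℝ :=
  sInf {y | ∃ c b, memC β c b ∧ y = supP β b c}


/-!
The infimum defining `G(β)` is bounded above by its value at the one-point weight
`c = (1/(β·2ᵇ), 0, 0, …)`. For that weight the constraint defining `A(c,b)` forces `α₀ = 1/2`, so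
the supremum is attained at a single point and equals `c₀·h(1/2) − h(c₀/2) = c₀ − h(c₀/2)`.
The infimum is well behaved because every `P(c,α)` is at least `−1`, as `0 ≤ h ≤ 1`.
-/

open Set

lemma binH_eq_binEntropy_div_log_two (p : ℝ) : binH p = Real.binEntropy p / Real.log 2 := by
  unfold binH Real.binEntropy Real.logb
  rw [one_div, one_div]
  ring

lemma binH_le_one (p : ℝ) : binH p ≤ 1 := by
  rw [binH_eq_binEntropy_div_log_two, div_le_one (Real.log_pos one_lt_two)]
  exact Real.binEntropy_le_log_two

lemma binH_nonneg {p : ℝ} (hp : p ∈ Icc (0 : ℝ) 1) : 0 ≤ binH p := by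
  rw [binH_eq_binEntropy_div_log_two]
  exact div_nonneg (Real.binEntropy_nonneg hp.1 hp.2) (Real.log_pos one_lt_two).le

lemma binH_half : binH (1 / 2) = 1 := by
  norm_num [binH, Real.logb_self_eq_one]

lemma neg_one_le_Pfun {c α : ℕ → ℝ} (hc : ∀ i, 0 ≤ c i) (hα : ∀ i, α i ∈ Icc (0 : ℝ) 1) :
    -1 ≤ Pfun c α := by
  have hsum : 0 ≤ ∑' i, binH (α i) * c i :=
    tsum_nonneg fun i => mul_nonneg (binH_nonneg (hα i)) (hc i)
  have := binH_le_one (∑' i, α i * c i)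
  rw [Pfun]
  linarith

/-- Also covers the junk cases: `sSup` of an empty or unbounded set of reals is `0`. -/
lemma neg_one_le_supP {β : ℝ} {b : ℕ} {c : ℕ → ℝ} (hc : ∀ i, 0 ≤ c i) : -1 ≤ supP β b c := by
  rw [supP]
  set S := {y | ∃ α, memA β b c α ∧ y = Pfun c α}
  rcases S.eq_empty_or_nonempty with hS | ⟨_, α, hα, rfl⟩
  · rw [hS, Real.sSup_empty]
    norm_num
  by_cases hbdd : BddAbove S
  · exact (neg_one_le_Pfun hc hα.1).trans (le_csSup hbdd ⟨α, hα, rfl⟩)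
  · rw [Real.sSup_of_not_bddAbove hbdd]
    norm_num

lemma Gfun_le_supP {β : ℝ} {b : ℕ} {c : ℕ → ℝ} (hc : memC β c b) : Gfun β ≤ supP β b c := by
  refine csInf_le ⟨-1, ?_⟩ ⟨c, b, hc, rfl⟩
  rintro _ ⟨c', b', hc', rfl⟩
  exact neg_one_le_supP fun i => (hc'.1 i).1

section SingleWeight

variable {β : ℝ} {b : ℕ}

lemma tsum_mul_single_zero (f : ℕ → ℝ) (x : ℝ) :
    ∑' i, f i * (Pi.single 0 x : ℕ → ℝ) i = f 0 * x :=
  (tsum_eq_single 0 fun i hi => by simp [hi]).trans (by simp)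

lemma memC_single_zero (hβ : 1 ≤ β) (b : ℕ) : memC β (Pi.single 0 (1 / (β * 2 ^ b))) b := by
  have hle : 1 / (β * 2 ^ b) ≤ 1 :=
    div_le_one_of_le₀ (one_le_mul_of_one_le_of_one_le hβ (one_le_pow₀ one_le_two)) (by positivity)
  have hnonneg : 0 ≤ 1 / (β * 2 ^ b) := by positivity
  refine ⟨fun i => ?_, ?_, fun n => ?_⟩
  · rcases eq_or_ne i 0 with rfl | hi
    · rw [Pi.single_eq_same]
      exact ⟨hnonneg, hle⟩
    · rw [Pi.single_eq_of_ne hi]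
      exact ⟨le_rfl, zero_le_one⟩
  · rw [tsum_eq_single 0 fun i hi => by simp [hi]]
    simp
  · rw [Finset.sum_pi_single']
    split_ifs
    exacts [hle, zero_le_one]

lemma Pfun_single_zero (x : ℝ) (α : ℕ → ℝ) :
    Pfun (Pi.single 0 x) α = binH (α 0) * x - binH (α 0 * x) := by
  rw [Pfun, tsum_mul_single_zero, tsum_mul_single_zero]

lemma memA_single_zero_iff (hβ : 0 < β) {α : ℕ → ℝ} :
    memA β b (Pi.single 0 (1 / (β * 2 ^ b))) α ↔ (∀ i, α i ∈ Icc (0 : ℝ) 1) ∧ α 0 = 1 / 2 := by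
  have hsum : ∑' i, α i * (Pi.single 0 (1 / (β * 2 ^ b)) : ℕ → ℝ) i / 2 ^ i =
      α 0 * (1 / (β * 2 ^ b)) := by
    rw [tsum_eq_single 0 fun i hi => by simp [hi]]
    simp
  rw [memA, hsum]
  refine and_congr_right fun _ => ⟨fun h => ?_, fun h => ?_⟩
  · rw [pow_succ] at h
    field_simp at h
    linarith
  · rw [h, pow_succ]
    field_simp

lemma supP_single_zero (hβ : 0 < β) :
    supP β b (Pi.single 0 (1 / (β * 2 ^ b))) = 1 / (β * 2 ^ b) - binH (1 / (β * 2 ^ (b + 1))) := by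
  have hvalue : binH (1 / 2) * (1 / (β * 2 ^ b)) - binH (1 / 2 * (1 / (β * 2 ^ b))) =
      1 / (β * 2 ^ b) - binH (1 / (β * 2 ^ (b + 1))) := by
    rw [binH_half, pow_succ]
    congr 2 <;> field_simp
  have hset : {y | ∃ α, memA β b (Pi.single 0 (1 / (β * 2 ^ b))) α ∧
      y = Pfun (Pi.single 0 (1 / (β * 2 ^ b))) α} =
      {1 / (β * 2 ^ b) - binH (1 / (β * 2 ^ (b + 1)))} := by
    ext y
    simp only [memA_single_zero_iff hβ, Pfun_single_zero, mem_ofPred_eq, mem_singleton_iff]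
    constructor
    · rintro ⟨α, ⟨-, hα0⟩, rfl⟩
      rw [hα0, hvalue]
    · rintro rfl
      exact ⟨fun _ => 1 / 2, ⟨fun _ => by norm_num, rfl⟩, hvalue.symm⟩
  rw [supP, hset, csSup_singleton]

end SingleWeight

/-- `G(β) ≤ 1/(2ᵇ·β) − h(1/(2^{b+1}·β))` for every `β ∈ [1,2)` and `b ∈ ℕ`. -/
theorem G_le_of_b (β : ℝ) (hβ : β ∈ Set.Ico (1 : ℝ) 2) (b : ℕ) :
    Gfun β ≤ 1 / (2 ^ b * β) - binH (1 / (2 ^ (b + 1) * β)) := by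
  have hβ0 : 0 < β := zero_lt_one.trans_le hβ.1
  calc Gfun β ≤ supP β b (Pi.single 0 (1 / (β * 2 ^ b))) := Gfun_le_supP (memC_single_zero hβ.1 b)
    _ = 1 / (2 ^ b * β) - binH (1 / (2 ^ (b + 1) * β)) := by
      rw [supP_single_zero hβ0, mul_comm β, mul_comm β]
end

section
/- For every β ∈ [1,2) and every (c,b) ∈ C(β), the supremum sup_{α ∈ A(c,b)} P(c,α) is attained: there exists α ∈ A(c,b) such that P(c,α) = sup_{α' ∈ A(c,b)} P(c,α'). -/
/-!
`A(c,b)` is a closed subset of the cube `[0,1]^ℕ`, which is compact in the product topology, and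
it contains the constant sequence `1/2`. Since `∑ cᵢ < ∞`, the series defining `P(c,·)` converge
uniformly on the cube, so `P(c,·)` is continuous there and attains its maximum on `A(c,b)`.
-/

open Set

lemma binH_eq_negMulLog (p : ℝ) :
    binH p = (Real.negMulLog p + Real.negMulLog (1 - p)) / Real.log 2 := by
  simp only [binH, Real.logb, Real.negMulLog, one_div, Real.log_inv]
  ring

lemma continuous_binH : Continuous binH := by
  rw [show binH = _ from funext binH_eq_negMulLog]
  fun_prop

lemma summable_of_memC {β : ℝ} {c : ℕ → ℝ} {b : ℕ} (hC : memC β c b) : Summable c :=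
  summable_of_sum_range_le (fun i => (hC.1 i).1) hC.2.2

lemma continuousOn_tsum_comp_mul {f : ℝ → ℝ} (hf : ContinuousOn f (Icc 0 1))
    {w : ℕ → ℝ} (hw : Summable w) :
    ContinuousOn (fun α : ℕ → ℝ => ∑' i, f (α i) * w i) (univ.pi fun _ => Icc 0 1) := by
  obtain ⟨M, hM⟩ := isCompact_Icc.exists_bound_of_continuousOn hf
  refine continuousOn_tsum (u := fun i => M * |w i|) (fun i => ?_)
    ((summable_abs_iff.2 hw).mul_left M) (fun i α hα => ?_)
  · exact (hf.comp (continuous_apply i).continuousOn fun _ hα => mem_univ_pi.1 hα i).mul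
      continuousOn_const
  · rw [norm_mul, Real.norm_eq_abs (w i)]
    exact mul_le_mul_of_nonneg_right (hM _ (mem_univ_pi.1 hα i)) (abs_nonneg _)

lemma continuousOn_Pfun {c : ℕ → ℝ} (hc : Summable c) :
    ContinuousOn (Pfun c) (univ.pi fun _ => Icc 0 1) :=
  (continuousOn_tsum_comp_mul continuous_binH.continuousOn hc).sub <|
    continuous_binH.comp_continuousOn (continuousOn_tsum_comp_mul continuousOn_id hc)

lemma isCompact_setOf_memA (β : ℝ) (b : ℕ) {c : ℕ → ℝ} (hc : Summable c) :
    IsCompact {α | memA β b c α} := by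
  have hw : Summable fun i => c i / 2 ^ i :=
    (summable_abs_iff.2 hc).of_norm_bounded fun i => by
      rw [norm_div, norm_pow, Real.norm_ofNat, Real.norm_eq_abs]
      exact div_le_self (abs_nonneg _) (one_le_pow₀ one_le_two)
  have hclosed := (continuousOn_tsum_comp_mul continuousOn_id hw).preimage_isClosed_of_isClosed
    (isClosed_set_pi fun _ _ => isClosed_Icc) (isClosed_singleton (x := 1 / (β * 2 ^ (b + 1))))
  convert (isCompact_univ_pi fun _ => isCompact_Icc).of_isClosed_subset hclosed
    inter_subset_left using 1
  ext α
  simp only [memA, mem_ofPred_eq, mem_inter_iff, mem_univ_pi, mem_preimage, mem_singleton_iff, id,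
    mul_div_assoc]

lemma memA_const_half {β : ℝ} {c : ℕ → ℝ} {b : ℕ}
    (hc : ∑' i : ℕ, c i / 2 ^ i = 1 / (β * 2 ^ b)) : memA β b c fun _ => 1 / 2 := by
  refine ⟨fun _ => by norm_num, ?_⟩
  simp only [mul_div_assoc, tsum_mul_left, hc, pow_succ]
  field_simp

theorem supP_attained_general (β : ℝ)
    (c : ℕ → ℝ) (b : ℕ) (hC : memC β c b) :
    ∃ α : ℕ → ℝ, memA β b c α ∧ Pfun c α = supP β b c := by
  have hc := summable_of_memC hC
  obtain ⟨α₀, hα₀, hmax⟩ := (isCompact_setOf_memA β b hc).exists_isMaxOn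
    ⟨fun _ => 1 / 2, memA_const_half hC.2.1⟩
    ((continuousOn_Pfun hc).mono fun _ hα => mem_univ_pi.2 hα.1)
  have hgreatest : IsGreatest {y | ∃ α, memA β b c α ∧ y = Pfun c α} (Pfun c α₀) := by
    refine ⟨⟨α₀, hα₀, rfl⟩, ?_⟩
    rintro _ ⟨α, hα, rfl⟩
    exact hmax hα
  exact ⟨α₀, hα₀, hgreatest.csSup_eq.symm⟩

/-- The supremum `sup_{α ∈ A(c,b)} P(c,α)` is attained. -/
theorem supP_attained (β : ℝ) (hβ : β ∈ Set.Ico (1 : ℝ) 2)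
    (c : ℕ → ℝ) (b : ℕ) (hC : memC β c b) :
    ∃ α : ℕ → ℝ, memA β b c α ∧ Pfun c α = supP β b c :=
  supP_attained_general β c b hC
end
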